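/- Let R, S be inconsistent edges of a directed graph G (with consistent/inconsistent edges) such that R and S are coupled and S ⋦ R (i.e., u_R is not reachable from u_S by any directed path in G). Then G admits an (R,S)-valid labeling L : V(G) → L into the six-element lattice L = {⊥, B, X, Φ, X*, ⊤}, that is: L(u_R) = Φ and L(v_R) ∈ {⊤, X, X*}; L(u_S) = X and L(v_S) ∈ {B, X*}; for every inconsistent edge T ∉ {R, S}, L(u_T) ≥ L(v_T); there is an undirected path P_R : v_R ↔ u_S with L(v) ≥ X for all v ∈ P_R; and there is an undirected path P_S : v_S ↔ u_R with L(v) ≥ B for all v ∈ P_S. -/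

import Mathlib

namespace CQA

variable {V : Type*}

/-- Directed reachability along edges in `A`. -/
def reach (A : Set (V × V)) (u v : V) : Prop :=
  Relation.ReflTransGen (fun x y => (x, y) ∈ A) u v

/-- `u` and `v` are in the same strongly connected component of the graph with edges `E`. -/
def sameSCC (E : Set (V × V)) (u v : V) : Prop := reach E u v ∧ reach E v u

/-- There is an undirected path in `E` from `a` to `b` all of whose vertices
(including the endpoints) avoid the set `A`. -/
def ureach (E : Set (V × V)) (A : Set V) (a b : V) : Prop :=
  a ∉ A ∧ Relation.ReflTransGen (fun x y => ((x, y) ∈ E ∨ (y, x) ∈ E) ∧ y ∉ A) a b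

/-- `u_R^{+,R}`: vertices reachable from the source of `R` in `G − {R}`. -/
def uplus (E : Set (V × V)) (R : V × V) : Set V := {v | reach (E \ {R}) R.1 v}

/-- `u^⊕`: vertices reachable from `u` using only consistent edges `Ec`. -/
def uoplus (Ec : Set (V × V)) (u : V) : Set V := {v | reach Ec u v}

/-- `C` is a source-equivalence class of inconsistent edges `Ei`. -/
def IsClass (E Ei : Set (V × V)) (C : Set (V × V)) : Prop :=
  ∃ R ∈ Ei, C = {S ∈ Ei | sameSCC E R.1 S.1}

/-- `C^⊕ = ⋂_{R ∈ C} u_R^⊕`. -/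
def Coplus (Ec : Set (V × V)) (C : Set (V × V)) : Set V :=
  {v | ∀ R ∈ C, v ∈ uoplus Ec R.1}

/-- `C⁺ = ⋂_{R ∈ C} u_R^{+,R}`. -/
def Cplus (E : Set (V × V)) (C : Set (V × V)) : Set V :=
  {v | ∀ R ∈ C, v ∈ uplus E R}

/-- `C₁ ≤⊕ C₂` iff some `S ∈ C₂` has `u_S ∈ C₁^⊕`. -/
def leOplus (Ec : Set (V × V)) (C₁ C₂ : Set (V × V)) : Prop :=
  ∃ S ∈ C₂, S.1 ∈ Coplus Ec C₁

/-- The strict order `C₁ <⊕ C₂`. -/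
def ltOplus (Ec : Set (V × V)) (C₁ C₂ : Set (V × V)) : Prop :=
  leOplus Ec C₁ C₂ ∧ C₁ ≠ C₂

/-- A sink: a maximal element of `<⊕` among source-equivalence classes. -/
def IsSink (E Ei Ec : Set (V × V)) (C : Set (V × V)) : Prop :=
  IsClass E Ei C ∧ ∀ C', IsClass E Ei C' → ¬ ltOplus Ec C C'

/-- `C' ∈ coupled⊕(C)`. -/
def coupledOplusCl (E Ec : Set (V × V)) (C C' : Set (V × V)) : Prop :=
  C' = C ∨ ∃ R ∈ C, ∃ S ∈ C', ureach E (Coplus Ec C) R.2 S.1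

/-- `C' ∈ coupled⁺(C)`. -/
def coupledPlusCl (E : Set (V × V)) (C C' : Set (V × V)) : Prop :=
  C' = C ∨ ∃ R ∈ C, ∃ S ∈ C', ureach E (Cplus E C) R.2 S.1

/-- `S ∈ coupled⁺(R)` for inconsistent edges `R, S`:
either `S ∈ [R]`, or there is an undirected path `v_R ↔ u_S` avoiding `u_R^{+,R}`. -/
def coupledPlusEdge (E Ei : Set (V × V)) (R S : V × V) : Prop :=
  S ∈ Ei ∧ (sameSCC E R.1 S.1 ∨ ureach E (uplus E R) R.2 S.1)

/-- `G` is splittable: every coupled pair of inconsistent edges is source-equivalent. -/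
def Splittable (E Ec : Set (V × V)) : Prop :=
  ∀ R ∈ E \ Ec, ∀ S ∈ E \ Ec,
    coupledPlusEdge E (E \ Ec) R S → coupledPlusEdge E (E \ Ec) S R → sameSCC E R.1 S.1

/-- `G` is f-closed: for every inconsistent edge `R`,
`v_R^⊕ ∩ u_R^{+,R} ⊆ u_R^⊕`. -/
def FClosed (E Ec : Set (V × V)) : Prop :=
  ∀ R ∈ E \ Ec, ∀ v, v ∈ uoplus Ec R.2 → v ∈ uplus E R → v ∈ uoplus Ec R.1

end CQA

/-- The six labels ⊥, B, X, Φ, X*, ⊤. -/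
inductive Lab : Type
  | bot | B | X | Phi | Xs | top
deriving DecidableEq

/-- The order on the six labels: ⊥ is minimum, ⊤ is maximum,
B ≤ Φ, X ≤ X*, B ≤ X*, and nothing else besides reflexivity. -/
def Lab.le : Lab → Lab → Prop := fun a b =>
  a = b ∨ a = Lab.bot ∨ b = Lab.top ∨
  (a = Lab.B ∧ b = Lab.Phi) ∨ (a = Lab.X ∧ b = Lab.Xs) ∨ (a = Lab.B ∧ b = Lab.Xs)


/-!
Classify each vertex by three flags: whether it lies in `P = u_R^{+,R}`, whether it lies in
`Q = u_S^{+,S}`, and whether it reaches `u_R`. Along an edge `T ∉ {R, S}` membership in `P`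
and in `Q` can only be gained and reaching `u_R` can only be lost, and the labeling is antitone
in the first two flags and monotone in the third, so no inconsistent edge `T ∉ {R, S}` raises
the label. The vertices not above `X` are exactly `P` and those not above `B` exactly `Q`, so the
two coupling paths serve as `P_R` and `P_S`. Finally `S ⋦ R` keeps `Q` away from the vertices
reaching `u_R`, which fixes the labels of `u_R` and `v_S`.
-/

namespace CQA

variable {V : Type*}

lemma ureach.notMem_right {E : Set (V × V)} {A : Set V} {a b : V} (h : ureach E A a b) :
    b ∉ A := by
  obtain ⟨ha, hpath⟩ := h
  induction hpath with
  | refl => exact ha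
  | tail _ hstep _ => exact hstep.2

lemma reach_of_mem_uplus {E : Set (V × V)} {R : V × V} {v : V} (hv : v ∈ uplus E R) :
    reach E R.1 v :=
  Relation.ReflTransGen.mono (fun _ _ h => h.1) _ _ hv

lemma mem_uplus_of_edge {E : Set (V × V)} {R T : V × V} (hT : T ∈ E) (hTR : T ≠ R)
    (h : T.1 ∈ uplus E R) : T.2 ∈ uplus E R :=
  Relation.ReflTransGen.tail h ⟨hT, hTR⟩

end CQA

namespace Lab

/-- `p`: the vertex lies in `u_R^{+,R}`; `q`: it lies in `u_S^{+,S}`; `w`: it reaches `u_R`. -/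
def ofFlags (p q w : Prop) [Decidable p] [Decidable q] [Decidable w] : Lab :=
  if q then (if p then bot else X)
  else if w then (if p then Phi else top)
  else if p then B else Xs

variable {p q w p' q' w' : Prop} [Decidable p] [Decidable q] [Decidable w]
  [Decidable p'] [Decidable q'] [Decidable w']

lemma ofFlags_le_ofFlags (hp : p → p') (hq : q → q') (hw : w' → w) :
    Lab.le (ofFlags p' q' w') (ofFlags p q w) := by
  by_cases p <;> by_cases q <;> by_cases w <;> by_cases p' <;> by_cases q' <;> by_cases w' <;>
    simp_all [ofFlags, Lab.le]

lemma X_le_ofFlags_iff : Lab.le X (ofFlags p q w) ↔ ¬ p := by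
  by_cases p <;> by_cases q <;> by_cases w <;> simp_all [ofFlags, Lab.le]

lemma B_le_ofFlags_iff : Lab.le B (ofFlags p q w) ↔ ¬ q := by
  by_cases p <;> by_cases q <;> by_cases w <;> simp_all [ofFlags, Lab.le]

end Lab

open CQA in
theorem stmt_16_general {V : Type*} (E Ec : Set (V × V))
    (R S : V × V) (hS : S ∈ E \ Ec)
    (hcoupRS : ureach E (uplus E R) R.2 S.1)
    (hcoupSR : ureach E (uplus E S) S.2 R.1)
    (hnles : ¬ reach E S.1 R.1) :
    ∃ L : V → Lab,
      L R.1 = Lab.Phi ∧ (L R.2 = Lab.top ∨ L R.2 = Lab.X ∨ L R.2 = Lab.Xs) ∧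
      L S.1 = Lab.X ∧ (L S.2 = Lab.B ∨ L S.2 = Lab.Xs) ∧
      (∀ T ∈ E \ Ec, T ≠ R → T ≠ S → Lab.le (L T.2) (L T.1)) ∧
      ureach E {v | ¬ Lab.le Lab.X (L v)} R.2 S.1 ∧
      ureach E {v | ¬ Lab.le Lab.B (L v)} S.2 R.1 := by
  classical
  have huR_mem : R.1 ∈ uplus E R := .refl
  have huR_reach : reach E R.1 R.1 := .refl
  have huS_mem : S.1 ∈ uplus E S := .refl
  have huR_notMem : R.1 ∉ uplus E S := fun h => hnles (reach_of_mem_uplus h)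
  have hvS_not_reach : ¬ reach E S.2 R.1 := fun h => hnles (h.head hS.1)
  refine ⟨fun v => Lab.ofFlags (v ∈ uplus E R) (v ∈ uplus E S) (reach E v R.1),
    ?_, ?_, ?_, ?_, ?_, ?_, ?_⟩
  · simp [Lab.ofFlags, huR_notMem, huR_mem, huR_reach]
  · simp only [Lab.ofFlags, hcoupRS.1, if_false]
    split_ifs <;> simp
  · simp [Lab.ofFlags, hcoupRS.notMem_right, huS_mem]
  · simp only [Lab.ofFlags, hcoupSR.1, hvS_not_reach, if_false]
    split_ifs <;> simp
  · intro T hT hTR hTS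
    exact Lab.ofFlags_le_ofFlags (mem_uplus_of_edge hT.1 hTR) (mem_uplus_of_edge hT.1 hTS)
      (Relation.ReflTransGen.head hT.1)
  · simpa [Lab.X_le_ofFlags_iff] using hcoupRS
  · simpa [Lab.B_le_ofFlags_iff] using hcoupSR

open CQA in
/-- if inconsistent edges R, S are coupled and S ⋦ R, then G
admits an (R,S)-valid labeling into the six-element lattice. -/
theorem stmt_16 {V : Type*} [Fintype V] (E Ec : Set (V × V)) (hEc : Ec ⊆ E)
    (R S : V × V) (hR : R ∈ E \ Ec) (hS : S ∈ E \ Ec)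
    (hcoupRS : ureach E (uplus E R) R.2 S.1)
    (hcoupSR : ureach E (uplus E S) S.2 R.1)
    (hnles : ¬ reach E S.1 R.1) :
    ∃ L : V → Lab,
      L R.1 = Lab.Phi ∧ (L R.2 = Lab.top ∨ L R.2 = Lab.X ∨ L R.2 = Lab.Xs) ∧
      L S.1 = Lab.X ∧ (L S.2 = Lab.B ∨ L S.2 = Lab.Xs) ∧
      (∀ T ∈ E \ Ec, T ≠ R → T ≠ S → Lab.le (L T.2) (L T.1)) ∧
      ureach E {v | ¬ Lab.le Lab.X (L v)} R.2 S.1 ∧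
      ureach E {v | ¬ Lab.le Lab.B (L v)} S.2 R.1 :=
  stmt_16_general E Ec R S hS hcoupRS hcoupSR hnles
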